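/- arXiv:1707.09271 — 4 statements merged into one kernel-verified Lean document; each statement's English description precedes it below -/
import Mathlib

section
/- Let A_1, ..., A_n be events in a probability space such that each A_i is mutually independent of all but at most t of the other events, and P(A_i) ≤ p for all i. If e·p·(t+1) ≤ 1, then P(⋂_i A_i^c) > 0. -/
open MeasureTheory ProbabilityTheory

/-- The key induction for the Lovász Local Lemma: for any finite set `S` not
containing `i`, `P(A i ∩ ⋂_{j ∈ S} (A j)ᶜ) ≤ x · P(⋂_{j ∈ S} (A j)ᶜ)`. -/
private lemma lll_key {Ω : Type} [MeasurableSpace Ω]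
    (μ : Measure Ω) [IsProbabilityMeasure μ]
    (n t : ℕ) (A : Fin n → Set Ω) (hA : ∀ i, MeasurableSet (A i))
    (J : Fin n → Finset (Fin n)) (hJt : ∀ i, (J i).card ≤ t)
    (hindep : ∀ i, Indep
      (MeasurableSpace.generateFrom {A i})
      (MeasurableSpace.generateFrom {s | ∃ j : Fin n, j ≠ i ∧ j ∉ J i ∧ s = A j}) μ)
    (x : ℝ) (hx0 : 0 < x) (hx1 : x < 1)
    (hpx : ∀ i, (μ (A i)).toReal ≤ x * (1 - x) ^ t) :
    ∀ m : ℕ, ∀ S : Finset (Fin n), S.card ≤ m → ∀ i, i ∉ S →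
      (μ (A i ∩ ⋂ j ∈ S, (A j)ᶜ)).toReal ≤ x * (μ (⋂ j ∈ S, (A j)ᶜ)).toReal := by
  intro m
  induction m with
  | zero =>
    intro S hS i hi
    have hSe : S = ∅ := Finset.card_eq_zero.1 (Nat.le_zero.1 hS)
    subst hSe
    simp only [Finset.notMem_empty, Set.iInter_of_empty, Set.iInter_univ, Set.inter_univ,
      measure_univ, ENNReal.toReal_one, mul_one]
    calc (μ (A i)).toReal ≤ x * (1 - x) ^ t := hpx i
      _ ≤ x * 1 := by
          have h1 : (1 - x) ^ t ≤ 1 := pow_le_one₀ (by linarith) (by linarith)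
          nlinarith
      _ = x := mul_one x
  | succ m ih =>
    intro S hS i hi
    set S₁ := S ∩ J i with hS₁def
    set S₂ := S \ J i with hS₂def
    have hS₂sub : S₂ ⊆ S := Finset.sdiff_subset
    have hS₁sub : S₁ ⊆ S := Finset.inter_subset_left
    have hunion : S₁ ∪ S₂ = S := by
      ext k
      simp only [hS₁def, hS₂def, Finset.mem_union, Finset.mem_inter, Finset.mem_sdiff]
      tauto
    -- independence step
    have hindep2 : μ (A i ∩ ⋂ j ∈ S₂, (A j)ᶜ) = μ (A i) * μ (⋂ j ∈ S₂, (A j)ᶜ) := by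
      have h1 : MeasurableSet[MeasurableSpace.generateFrom {A i}] (A i) :=
        MeasurableSpace.measurableSet_generateFrom rfl
      have h2 : MeasurableSet[MeasurableSpace.generateFrom
          {s | ∃ j : Fin n, j ≠ i ∧ j ∉ J i ∧ s = A j}] (⋂ j ∈ S₂, (A j)ᶜ) := by
        refine MeasurableSet.biInter S₂.countable_toSet fun j hj => MeasurableSet.compl ?_
        refine MeasurableSpace.measurableSet_generateFrom ?_
        exact ⟨j, fun hji => hi (hji ▸ hS₂sub hj), (Finset.mem_sdiff.1 hj).2, rfl⟩
      exact (Indep_iff _ _ μ).1 (hindep i) _ _ h1 h2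
    -- peeling step
    have peel : ∀ T : Finset (Fin n), T ⊆ S₁ →
        (1 - x) ^ T.card * (μ (⋂ j ∈ S₂, (A j)ᶜ)).toReal
          ≤ (μ (⋂ j ∈ T ∪ S₂, (A j)ᶜ)).toReal := by
      intro T
      induction T using Finset.induction_on with
      | empty => intro _; simp
      | @insert j T hjT ihT =>
        intro hTsub
        have hj1 : j ∈ S₁ := hTsub (Finset.mem_insert_self _ _)
        have hTs : T ⊆ S₁ := (Finset.insert_subset_iff.1 hTsub).2
        have hjJ : j ∈ J i := (Finset.mem_inter.1 hj1).2
        have hjS : j ∈ S := hS₁sub hj1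
        have hjS₂ : j ∉ S₂ := fun hc => (Finset.mem_sdiff.1 hc).2 hjJ
        have hjTU : j ∉ T ∪ S₂ := by
          simp only [Finset.mem_union]
          rintro (hc | hc)
          exacts [hjT hc, hjS₂ hc]
        have hsubS : T ∪ S₂ ⊆ S.erase j := by
          intro k hk
          refine Finset.mem_erase.2 ⟨fun hkj => hjTU (hkj ▸ hk), ?_⟩
          rcases Finset.mem_union.1 hk with hk | hk
          exacts [hS₁sub (hTs hk), hS₂sub hk]
        have hcard : (T ∪ S₂).card ≤ m := by
          calc (T ∪ S₂).card ≤ (S.erase j).card := Finset.card_le_card hsubS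
            _ = S.card - 1 := Finset.card_erase_of_mem hjS
            _ ≤ m := by omega
        have hIH := ih (T ∪ S₂) hcard j hjTU
        have hIH2 := ihT hTs
        -- split the measure
        have hsplit : (μ (⋂ k ∈ T ∪ S₂, (A k)ᶜ)).toReal
            = (μ (A j ∩ ⋂ k ∈ T ∪ S₂, (A k)ᶜ)).toReal
              + (μ (⋂ k ∈ insert j (T ∪ S₂), (A k)ᶜ)).toReal := by
          rw [Finset.set_biInter_insert,
            ← ENNReal.toReal_add (measure_ne_top μ _) (measure_ne_top μ _)]
          congr 1
          have h3 := measure_inter_add_diff (μ := μ) (⋂ k ∈ T ∪ S₂, (A k)ᶜ) (hA j)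
          rw [Set.diff_eq] at h3
          rw [Set.inter_comm (A j), Set.inter_comm ((A j)ᶜ)]
          exact h3.symm
        have hins : insert j T ∪ S₂ = insert j (T ∪ S₂) := Finset.insert_union j T S₂
        rw [hins, Finset.card_insert_of_notMem hjT, pow_succ]
        have hν0 : 0 ≤ (μ (⋂ j ∈ S₂, (A j)ᶜ)).toReal := ENNReal.toReal_nonneg
        have hνU0 : 0 ≤ (μ (⋂ k ∈ T ∪ S₂, (A k)ᶜ)).toReal := ENNReal.toReal_nonneg
        nlinarith [mul_le_mul_of_nonneg_left hIH2 (by linarith : (0:ℝ) ≤ 1 - x)]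
    -- assemble
    have hmono : (μ (A i ∩ ⋂ j ∈ S, (A j)ᶜ)).toReal ≤ (μ (A i ∩ ⋂ j ∈ S₂, (A j)ᶜ)).toReal := by
      refine ENNReal.toReal_mono (measure_ne_top μ _) (measure_mono ?_)
      refine Set.inter_subset_inter_right _ ?_
      exact Set.biInter_subset_biInter_left hS₂sub
    have hcard₁ : S₁.card ≤ t := le_trans (Finset.card_le_card Finset.inter_subset_right) (hJt i)
    have hpow : (1 - x) ^ t ≤ (1 - x) ^ S₁.card :=
      pow_le_pow_of_le_one (by linarith) (by linarith) hcard₁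
    have hpeel := peel S₁ (le_refl S₁)
    rw [hunion] at hpeel
    have hν0 : 0 ≤ (μ (⋂ j ∈ S₂, (A j)ᶜ)).toReal := ENNReal.toReal_nonneg
    calc (μ (A i ∩ ⋂ j ∈ S, (A j)ᶜ)).toReal
        ≤ (μ (A i ∩ ⋂ j ∈ S₂, (A j)ᶜ)).toReal := hmono
      _ = (μ (A i)).toReal * (μ (⋂ j ∈ S₂, (A j)ᶜ)).toReal := by
          rw [hindep2, ENNReal.toReal_mul]
      _ ≤ (x * (1 - x) ^ t) * (μ (⋂ j ∈ S₂, (A j)ᶜ)).toReal :=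
          mul_le_mul_of_nonneg_right (hpx i) hν0
      _ ≤ x * ((1 - x) ^ S₁.card * (μ (⋂ j ∈ S₂, (A j)ᶜ)).toReal) := by
          rw [← mul_assoc]
          exact mul_le_mul_of_nonneg_right
            (mul_le_mul_of_nonneg_left hpow (le_of_lt hx0)) hν0
      _ ≤ x * (μ (⋂ j ∈ S, (A j)ᶜ)).toReal :=
          mul_le_mul_of_nonneg_left hpeel (le_of_lt hx0)

/-- The symmetric Lovász Local Lemma.  Let `A 1, …, A n` be events in a probability
space such that each `A i` is mutually independent (independent of the generated
σ-algebra) of all other events except those indexed by `J i`, with `|J i| ≤ t`, and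
`P(A i) ≤ p` for all `i`.  If `e · p · (t + 1) ≤ 1` then `P(⋂ i, (A i)ᶜ) > 0`. -/
theorem lovasz_local_lemma {Ω : Type} [MeasurableSpace Ω]
    (μ : Measure Ω) [IsProbabilityMeasure μ]
    (n t : ℕ) (A : Fin n → Set Ω) (hA : ∀ i, MeasurableSet (A i))
    (J : Fin n → Finset (Fin n)) (hJt : ∀ i, (J i).card ≤ t)
    (hindep : ∀ i, Indep
      (MeasurableSpace.generateFrom {A i})
      (MeasurableSpace.generateFrom {s | ∃ j : Fin n, j ≠ i ∧ j ∉ J i ∧ s = A j}) μ)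
    (p : ℝ) (hp : ∀ i, (μ (A i)).toReal ≤ p)
    (h : Real.exp 1 * p * (t + 1) ≤ 1) :
    0 < μ (⋂ i, (A i)ᶜ) := by
  rcases Nat.eq_zero_or_pos n with hn | hn
  · subst hn
    haveI : IsEmpty (Fin 0) := Fin.isEmpty'
    rw [Set.iInter_of_empty]
    simp
  -- set x := 1/(t+2)
  set x : ℝ := ((t : ℝ) + 2)⁻¹ with hxdef
  have ht2 : (0:ℝ) < (t : ℝ) + 2 := by positivity
  have ht1 : (0:ℝ) < (t : ℝ) + 1 := by positivity
  have hx0 : 0 < x := by positivity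
  have hx1 : x < 1 := by
    rw [hxdef, inv_lt_one_iff₀]
    right; linarith
  have he : (0:ℝ) < Real.exp 1 := Real.exp_pos 1
  have hp0 : 0 ≤ p := le_trans ENNReal.toReal_nonneg (hp ⟨0, hn⟩)
  -- p ≤ x (1-x)^t
  have h1x : 1 - x = ((t:ℝ) + 1) / ((t:ℝ) + 2) := by
    rw [hxdef]; field_simp; ring
  have hexp : (((t:ℝ) + 2) / ((t:ℝ) + 1)) ^ (t + 1) ≤ Real.exp 1 := by
    have hb : ((t:ℝ) + 2) / ((t:ℝ) + 1) ≤ Real.exp (1 / ((t:ℝ) + 1)) := by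
      have h0 : ((t:ℝ) + 2) / ((t:ℝ) + 1) = 1 / ((t:ℝ) + 1) + 1 := by field_simp; ring
      rw [h0]
      exact Real.add_one_le_exp _
    calc (((t:ℝ) + 2) / ((t:ℝ) + 1)) ^ (t + 1)
        ≤ (Real.exp (1 / ((t:ℝ) + 1))) ^ (t + 1) :=
          pow_le_pow_left₀ (by positivity) hb _
      _ = Real.exp (((t:ℕ) + 1 : ℕ) * (1 / ((t:ℝ) + 1))) := by
          rw [Real.exp_nat_mul]
      _ = Real.exp 1 := by
          congr 1
          push_cast
          field_simp
  have hmain : ((t:ℝ) + 2) ^ (t + 1) ≤ Real.exp 1 * ((t:ℝ) + 1) ^ (t + 1) := by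
    have h2 : ((t:ℝ) + 2) ^ (t + 1)
        = (((t:ℝ) + 2) / ((t:ℝ) + 1)) ^ (t + 1) * ((t:ℝ) + 1) ^ (t + 1) := by
      rw [div_pow]
      field_simp
    rw [h2]
    exact mul_le_mul_of_nonneg_right hexp (by positivity)
  have hpe : p ≤ 1 / (Real.exp 1 * ((t:ℝ) + 1)) := by
    rw [le_div_iff₀ (by positivity)]
    calc p * (Real.exp 1 * ((t:ℝ) + 1)) = Real.exp 1 * p * ((t:ℝ) + 1) := by ring
      _ ≤ 1 := h
  have hpx : p ≤ x * (1 - x) ^ t := by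
    have hgoal : 1 / (Real.exp 1 * ((t:ℝ) + 1)) ≤ x * (1 - x) ^ t := by
      rw [h1x, hxdef, div_pow]
      have hR : (((t:ℝ) + 2))⁻¹ * (((t:ℝ) + 1) ^ t / ((t:ℝ) + 2) ^ t)
          = ((t:ℝ) + 1) ^ t / ((t:ℝ) + 2) ^ (t + 1) := by
        rw [pow_succ]
        field_simp
      rw [hR, div_le_div_iff₀ (by positivity) (by positivity)]
      calc 1 * ((t:ℝ) + 2) ^ (t + 1) = ((t:ℝ) + 2) ^ (t + 1) := one_mul _
        _ ≤ Real.exp 1 * ((t:ℝ) + 1) ^ (t + 1) := hmain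
        _ = ((t:ℝ) + 1) ^ t * (Real.exp 1 * ((t:ℝ) + 1)) := by rw [pow_succ]; ring
    exact le_trans hpe hgoal
  have hpxA : ∀ i, (μ (A i)).toReal ≤ x * (1 - x) ^ t := fun i => le_trans (hp i) hpx
  have key := lll_key μ n t A hA J hJt hindep x hx0 hx1 hpxA
  -- positivity by induction
  have pos : ∀ S : Finset (Fin n), 0 < (μ (⋂ j ∈ S, (A j)ᶜ)).toReal := by
    intro S
    induction S using Finset.induction_on with
    | empty => simp
    | @insert i S hiS ihS =>
      have hk := key S.card S le_rfl i hiS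
      have hsplit : (μ (⋂ k ∈ S, (A k)ᶜ)).toReal
          = (μ (A i ∩ ⋂ k ∈ S, (A k)ᶜ)).toReal
            + (μ (⋂ k ∈ insert i S, (A k)ᶜ)).toReal := by
        rw [Finset.set_biInter_insert,
          ← ENNReal.toReal_add (measure_ne_top μ _) (measure_ne_top μ _)]
        congr 1
        have h3 := measure_inter_add_diff (μ := μ) (⋂ k ∈ S, (A k)ᶜ) (hA i)
        rw [Set.diff_eq] at h3
        rw [Set.inter_comm (A i), Set.inter_comm ((A i)ᶜ)]
        exact h3.symm
      nlinarith
  have hfin : 0 < (μ (⋂ j ∈ (Finset.univ : Finset (Fin n)), (A j)ᶜ)).toReal := pos Finset.univ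
  have heq : (⋂ i, (A i)ᶜ) = ⋂ j ∈ (Finset.univ : Finset (Fin n)), (A j)ᶜ := by
    simp
  rw [heq]
  refine pos_iff_ne_zero.2 fun h0 => ?_
  rw [h0] at hfin
  simp at hfin
end

section
/- For every d ≥ 1 and every k ≥ 0 there exists a triangulation T of the d-sphere S^d with at most 2(d+1) edges at each vertex and exactly d+2+k vertices, obtained from the boundary of the (d+1)-simplex by a sequence of k bistellar 0-moves (stellar subdivisions of facets). -/
/-- `Y` is obtained from the `d`-dimensional complex `X` by a bistellar 0-move: a
`d`-face `σ` of `X` is deleted and replaced by the cone over its boundary from a new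
vertex `w`. -/
def Bistellar0 (d : ℕ) (X Y : Set (Finset ℕ)) : Prop :=
  ∃ σ ∈ X, ∃ w : ℕ, σ.card = d + 1 ∧ (∀ s ∈ X, w ∉ s) ∧
    Y = (X \ {σ}) ∪ {t | ∃ τ ⊆ σ, τ ≠ σ ∧ t = insert w τ}

/-- The boundary of the `(d+1)`-simplex on the vertex set `{0, …, d+1}`: a triangulation
of `S^d` with `d + 2` vertices. -/
def SimplexBoundary (d : ℕ) : Set (Finset ℕ) :=
  {s : Finset ℕ | s ⊆ Finset.range (d + 2) ∧ s ≠ Finset.range (d + 2)}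


namespace SphereTri

/-- vertex enumeration skipping `d+1` -/
def a (d p : ℕ) : ℕ := if p ≤ d then p else p + 1

/-- the facet subdivided at step `i` -/
def sig (d i : ℕ) : Finset ℕ := (Finset.Icc i (i + d)).image (a d)

/-- the new vertex at step `i` -/
def w (d i : ℕ) : ℕ := d + 2 + i

def cone (d i : ℕ) : Set (Finset ℕ) :=
  {t | ∃ τ ⊆ sig d i, τ ≠ sig d i ∧ t = insert (w d i) τ}

def X (d n : ℕ) : Set (Finset ℕ) :=
  (SimplexBoundary d ∪ ⋃ i ∈ Set.Iio n, cone d i) \ {s | ∃ i < n, s = sig d i}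

lemma a_strictMono (d : ℕ) : StrictMono (a d) := by
  intro p q h; unfold a; split <;> split <;> omega

lemma a_inj (d : ℕ) : Function.Injective (a d) := (a_strictMono d).injective

lemma a_ne (d p : ℕ) : a d p ≠ d + 1 := by unfold a; split <;> omega

lemma a_of_le {d p : ℕ} (h : p ≤ d) : a d p = p := if_pos h

lemma a_of_gt {d p : ℕ} (h : d < p) : a d p = p + 1 := if_neg (by omega)

lemma self_le_a (d p : ℕ) : p ≤ a d p := by unfold a; split <;> omega

lemma a_le_succ (d p : ℕ) : a d p ≤ p + 1 := by unfold a; split <;> omega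

lemma mem_sig {d i x : ℕ} : x ∈ sig d i ↔ ∃ p, (i ≤ p ∧ p ≤ i + d) ∧ a d p = x := by
  simp [sig, Finset.mem_image, Finset.mem_Icc]

lemma card_sig (d i : ℕ) : (sig d i).card = d + 1 := by
  rw [sig, Finset.card_image_of_injective _ (a_inj d), Nat.card_Icc]; omega

lemma sig_inj {d i j : ℕ} (h : sig d i = sig d j) : i = j := by
  have h1 : a d i ∈ sig d j := by
    rw [← h]; exact mem_sig.2 ⟨i, ⟨le_refl _, by omega⟩, rfl⟩
  have h2 : a d j ∈ sig d i := by
    rw [h]; exact mem_sig.2 ⟨j, ⟨le_refl _, by omega⟩, rfl⟩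
  obtain ⟨p, hp, hpa⟩ := mem_sig.1 h1
  obtain ⟨q, hq, hqa⟩ := mem_sig.1 h2
  have := a_inj d hpa
  have := a_inj d hqa
  omega

lemma a_eq_w (d i : ℕ) : a d (i + d + 1) = w d i := by
  rw [a_of_gt (by omega), w]; omega

lemma w_mem_of_mem_cone {d i : ℕ} {t : Finset ℕ} (h : t ∈ cone d i) : w d i ∈ t := by
  obtain ⟨τ, -, -, rfl⟩ := h; exact Finset.mem_insert_self _ _

lemma mem_of_mem_cone {d i x : ℕ} {t : Finset ℕ} (ht : t ∈ cone d i) (hx : x ∈ t) :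
    ∃ p, (i ≤ p ∧ p ≤ i + d + 1) ∧ a d p = x := by
  obtain ⟨τ, hτ, -, rfl⟩ := ht
  rcases Finset.mem_insert.1 hx with h | h
  · exact ⟨i + d + 1, ⟨by omega, le_refl _⟩, by rw [a_eq_w]; omega⟩
  · obtain ⟨p, hp, hpa⟩ := mem_sig.1 (hτ h)
    exact ⟨p, ⟨hp.1, by omega⟩, hpa⟩

lemma sig_notMem_cone {d j n : ℕ} (h : j ≤ n) : sig d j ∉ cone d n := by
  intro hc
  obtain ⟨p, hp, hpa⟩ := mem_sig.1 (w_mem_of_mem_cone hc)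
  rw [← a_eq_w] at hpa
  have := a_inj d hpa
  omega

lemma sig_succ_mem_cone (d i : ℕ) : sig d (i + 1) ∈ cone d i := by
  refine ⟨(Finset.Icc (i + 1) (i + d)).image (a d), ?_, ?_, ?_⟩
  · exact Finset.image_subset_image (Finset.Icc_subset_Icc (by omega) (le_refl _))
  · intro h
    have h1 : a d i ∈ sig d i := mem_sig.2 ⟨i, ⟨le_refl _, by omega⟩, rfl⟩
    rw [← h] at h1
    simp only [Finset.mem_image, Finset.mem_Icc] at h1
    obtain ⟨p, hp, hpa⟩ := h1
    have := a_inj d hpa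
    omega
  · rw [sig, ← a_eq_w]
    rw [← Finset.image_insert]
    congr 1
    ext x
    simp only [Finset.mem_insert, Finset.mem_Icc]
    omega

lemma X_zero (d : ℕ) : X d 0 = SimplexBoundary d := by
  simp [X]

lemma mem_X_bound {d n : ℕ} {s : Finset ℕ} (hs : s ∈ X d n) {x : ℕ} (hx : x ∈ s) :
    x < d + 2 + n := by
  rcases hs.1 with h | h
  · have := h.1 hx
    simp only [Finset.mem_range] at this
    omega
  · simp only [Set.mem_iUnion, Set.mem_Iio, exists_prop] at h
    obtain ⟨i, hi, hc⟩ := h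
    obtain ⟨p, hp, hpa⟩ := mem_of_mem_cone hc hx
    have := a_le_succ d p
    omega

lemma sig_mem_X (d n : ℕ) : sig d n ∈ X d n := by
  constructor
  · cases n with
    | zero =>
      left
      constructor
      · intro x hx
        obtain ⟨p, hp, hpa⟩ := mem_sig.1 hx
        have : p ≤ d := by omega
        rw [a_of_le this] at hpa
        simp only [Finset.mem_range]; omega
      · intro h
        have := card_sig d 0
        rw [h, Finset.card_range] at this
        omega
    | succ m =>
      right
      simp only [Set.mem_iUnion, Set.mem_Iio, exists_prop]
      exact ⟨m, by omega, sig_succ_mem_cone d m⟩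
  · rintro ⟨i, hi, h⟩
    have := sig_inj h
    omega

lemma X_step (d n : ℕ) : X d (n + 1) = (X d n \ {sig d n}) ∪ cone d n := by
  ext t
  simp only [X, Set.mem_diff, Set.mem_union, Set.mem_iUnion, Set.mem_Iio, exists_prop,
    Set.mem_setOf_eq, Set.mem_singleton_iff]
  constructor
  · rintro ⟨h1, h2⟩
    by_cases hc : t ∈ cone d n
    · exact Or.inr hc
    · left
      refine ⟨⟨?_, fun ⟨i, hi, he⟩ => h2 ⟨i, by omega, he⟩⟩, fun he => h2 ⟨n, by omega, he⟩⟩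
      rcases h1 with h | ⟨i, hi, h⟩
      · exact Or.inl h
      · rcases Nat.lt_or_ge i n with hi' | hi'
        · exact Or.inr ⟨i, hi', h⟩
        · have hin : i = n := by omega
          subst hin; exact absurd h hc
  · rintro (⟨⟨h1, h2⟩, h3⟩ | hc)
    · refine ⟨?_, ?_⟩
      · rcases h1 with h | ⟨i, hi, h⟩
        · exact Or.inl h
        · exact Or.inr ⟨i, by omega, h⟩
      · rintro ⟨i, hi, he⟩
        rcases Nat.lt_or_ge i n with hi' | hi'
        · exact h2 ⟨i, hi', he⟩
        · have hin : i = n := by omega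
          subst hin; exact h3 he
    · refine ⟨Or.inr ⟨n, by omega, hc⟩, ?_⟩
      rintro ⟨i, hi, he⟩
      exact sig_notMem_cone (by omega : i ≤ n) (he ▸ hc)

lemma bistellar_step (d n : ℕ) : Bistellar0 d (X d n) (X d (n + 1)) := by
  refine ⟨sig d n, sig_mem_X d n, w d n, card_sig d n, ?_, ?_⟩
  · intro s hs hw
    have := mem_X_bound hs hw
    simp only [w] at this
    omega
  · exact X_step d n

end SphereTri

namespace SphereTri

lemma singleton_mem_X {d k v : ℕ} (hd : 1 ≤ d) : {v} ∈ X d k ↔ v < d + 2 + k := by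
  constructor
  · intro h
    exact mem_X_bound h (Finset.mem_singleton_self v)
  · intro hv
    constructor
    · rcases Nat.lt_or_ge v (d + 2) with h | h
      · left
        constructor
        · intro x hx
          simp only [Finset.mem_singleton] at hx
          simp only [Finset.mem_range]; omega
        · intro he
          have := congrArg Finset.card he
          rw [Finset.card_singleton, Finset.card_range] at this
          omega
      · right
        simp only [Set.mem_iUnion, Set.mem_Iio, exists_prop]
        refine ⟨v - (d + 2), by omega, ∅, Finset.empty_subset _, ?_, ?_⟩
        · intro he
          have := card_sig d (v - (d + 2))
          rw [← he, Finset.card_empty] at this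
          omega
        · rw [show w d (v - (d + 2)) = v by rw [w]; omega]
          rfl
    · rintro ⟨i, hi, he⟩
      have := card_sig d i
      rw [← he, Finset.card_singleton] at this
      omega

/-- superset of the set of possible neighbours of `v` in `X d k` -/
def Nfin (d v : ℕ) : Finset ℕ :=
  if v = d + 1 then (Finset.range (d + 2)).erase (d + 1)
  else if v ≤ d then insert (d + 1) (((Finset.Icc 0 (v + d + 1)).image (a d)).erase v)
  else ((Finset.Icc (v - 1 - (d + 1)) (v + d)).image (a d)).erase v

lemma card_Nfin (d v : ℕ) : (Nfin d v).card ≤ 2 * (d + 1) := by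
  unfold Nfin
  split
  · calc ((Finset.range (d + 2)).erase (d + 1)).card ≤ (Finset.range (d + 2)).card :=
          Finset.card_erase_le
      _ = d + 2 := Finset.card_range _
      _ ≤ 2 * (d + 1) := by omega
  · split
    · rename_i h1 h2
      have hv : v ∈ (Finset.Icc 0 (v + d + 1)).image (a d) := by
        refine Finset.mem_image.2 ⟨v, ?_, a_of_le h2⟩
        simp only [Finset.mem_Icc]; omega
      calc (insert (d + 1) (((Finset.Icc 0 (v + d + 1)).image (a d)).erase v)).card
          ≤ (((Finset.Icc 0 (v + d + 1)).image (a d)).erase v).card + 1 :=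
            Finset.card_insert_le _ _
        _ = ((Finset.Icc 0 (v + d + 1)).image (a d)).card - 1 + 1 := by
            rw [Finset.card_erase_of_mem hv]
        _ ≤ (Finset.Icc 0 (v + d + 1)).card - 1 + 1 := by
            have := Finset.card_image_le (s := Finset.Icc 0 (v + d + 1)) (f := a d)
            omega
        _ ≤ 2 * (d + 1) := by rw [Nat.card_Icc]; omega
    · rename_i h1 h2
      have hv : v ∈ (Finset.Icc (v - 1 - (d + 1)) (v + d)).image (a d) := by
        refine Finset.mem_image.2 ⟨v - 1, ?_, ?_⟩
        · simp only [Finset.mem_Icc]; omega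
        · rw [a_of_gt (by omega)]; omega
      calc (((Finset.Icc (v - 1 - (d + 1)) (v + d)).image (a d)).erase v).card
          = ((Finset.Icc (v - 1 - (d + 1)) (v + d)).image (a d)).card - 1 := by
            rw [Finset.card_erase_of_mem hv]
        _ ≤ (Finset.Icc (v - 1 - (d + 1)) (v + d)).card - 1 := by
            have := Finset.card_image_le (s := Finset.Icc (v - 1 - (d + 1)) (v + d)) (f := a d)
            omega
        _ ≤ 2 * (d + 1) := by rw [Nat.card_Icc]; omega

lemma neighbor_mem {d k v u : ℕ} {e : Finset ℕ} (he : e ∈ X d k) (hv : v ∈ e)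
    (hu : u ∈ e) (huv : u ≠ v) : u ∈ Nfin d v := by
  rcases he.1 with h | h
  · -- e in the simplex boundary
    have hvr : v < d + 2 := by have := h.1 hv; simpa [Finset.mem_range] using this
    have hur : u < d + 2 := by have := h.1 hu; simpa [Finset.mem_range] using this
    unfold Nfin
    split
    · exact Finset.mem_erase.2 ⟨by omega, Finset.mem_range.2 hur⟩
    · rename_i hne
      rw [if_pos (by omega : v ≤ d)]
      rcases Nat.eq_or_lt_of_le (by omega : u ≤ d + 1) with h' | h'
      · exact Finset.mem_insert.2 (Or.inl (by omega))
      · refine Finset.mem_insert.2 (Or.inr (Finset.mem_erase.2 ⟨huv, ?_⟩))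
        refine Finset.mem_image.2 ⟨u, ?_, a_of_le (by omega)⟩
        simp only [Finset.mem_Icc]; omega
  · simp only [Set.mem_iUnion, Set.mem_Iio, exists_prop] at h
    obtain ⟨i, hi, hc⟩ := h
    obtain ⟨p, hp, hpa⟩ := mem_of_mem_cone hc hv
    obtain ⟨q, hq, hqa⟩ := mem_of_mem_cone hc hu
    unfold Nfin
    split
    · rename_i hvd
      exact absurd (hvd ▸ hpa) (a_ne d p)
    · split
      · -- v ≤ d, so a d p = v forces p = v
        rename_i hne hvd
        have hpv : p = v := by
          by_cases hpd : p ≤ d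
          · rw [a_of_le hpd] at hpa; omega
          · rw [a_of_gt (by omega)] at hpa; omega
        refine Finset.mem_insert.2 (Or.inr (Finset.mem_erase.2 ⟨huv, ?_⟩))
        refine Finset.mem_image.2 ⟨q, ?_, hqa⟩
        simp only [Finset.mem_Icc]; omega
      · rename_i hne hvd
        have hpv : p = v - 1 ∧ d + 2 ≤ v := by
          by_cases hpd : p ≤ d
          · rw [a_of_le hpd] at hpa; omega
          · rw [a_of_gt (by omega)] at hpa; omega
        refine Finset.mem_erase.2 ⟨huv, ?_⟩
        refine Finset.mem_image.2 ⟨q, ?_, hqa⟩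
        simp only [Finset.mem_Icc]; omega

lemma edge_bound (d k v : ℕ) :
    {e | e ∈ X d k ∧ e.card = 2 ∧ v ∈ e}.ncard ≤ 2 * (d + 1) := by
  have hsub : {e | e ∈ X d k ∧ e.card = 2 ∧ v ∈ e} ⊆
      ↑((Nfin d v).image (fun u => ({v, u} : Finset ℕ))) := by
    rintro e ⟨he, hcard, hv⟩
    obtain ⟨x, y, hxy, rfl⟩ := Finset.card_eq_two.1 hcard
    simp only [Finset.coe_image, Set.mem_image, Finset.mem_coe]
    rcases Finset.mem_insert.1 hv with rfl | hv'
    · exact ⟨y, neighbor_mem he hv (by simp) (Ne.symm hxy), rfl⟩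
    · have hv2 : v = y := Finset.mem_singleton.1 hv'
      subst hv2
      refine ⟨x, neighbor_mem he hv (by simp) hxy, ?_⟩
      rw [Finset.pair_comm]
  calc {e | e ∈ X d k ∧ e.card = 2 ∧ v ∈ e}.ncard
      ≤ (↑((Nfin d v).image (fun u => ({v, u} : Finset ℕ))) : Set (Finset ℕ)).ncard :=
        Set.ncard_le_ncard hsub (Finset.finite_toSet _)
    _ = ((Nfin d v).image (fun u => ({v, u} : Finset ℕ))).card := Set.ncard_coe_finset _
    _ ≤ (Nfin d v).card := Finset.card_image_le
    _ ≤ 2 * (d + 1) := card_Nfin d v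

end SphereTri

/-- For every `d ≥ 1` and `k ≥ 0` there is a triangulation `T` of `S^d`, obtained from
the boundary of the `(d+1)`-simplex by a sequence of `k` bistellar 0-moves, which has
exactly `d + 2 + k` vertices and at most `2(d+1)` edges at each vertex. -/
theorem sphere_triangulation_bounded_degree (d k : ℕ) (hd : 1 ≤ d) :
    ∃ f : Fin (k + 1) → Set (Finset ℕ),
      f 0 = SimplexBoundary d ∧
      (∀ i : Fin k, Bistellar0 d (f i.castSucc) (f i.succ)) ∧
      {v : ℕ | {v} ∈ f (Fin.last k)}.ncard = d + 2 + k ∧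
      ∀ v : ℕ, {e | e ∈ f (Fin.last k) ∧ e.card = 2 ∧ v ∈ e}.ncard ≤ 2 * (d + 1) := by
  refine ⟨fun i => SphereTri.X d i.val, ?_, ?_, ?_, ?_⟩
  · simpa using SphereTri.X_zero d
  · intro i
    simpa [Fin.coe_castSucc, Fin.val_succ] using SphereTri.bistellar_step d i.val
  · have hset : {v : ℕ | {v} ∈ SphereTri.X d (Fin.last k).val} =
        ↑(Finset.range (d + 2 + k)) := by
      ext v
      simp only [Set.mem_setOf_eq, Finset.coe_range, Set.mem_Iio, Fin.val_last]
      exact SphereTri.singleton_mem_X hd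
    rw [hset, Set.ncard_coe_finset, Finset.card_range]
  · intro v
    exact SphereTri.edge_bound d (Fin.last k).val v
end

section
/- Let X be a finite oriented simplicial complex whose orientation is induced by a linear order on its vertices, and let SX be the suspension of X with two new suspension vertices w_1, w_2 placed before all vertices of X in the order. Then for every i > 0, the chain map φ : C_i(X) → C_{i+1}(SX) sending a generator [v_0,...,v_i] to [w_1,v_0,...,v_i] − [w_2,v_0,...,v_i] induces an isomorphism H_i(X) ≅ H_{i+1}(SX) of simplicial homology groups with integer coefficients. -/
/-- An (abstract, possibly infinite) simplicial complex on a vertex type `V`: a family of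
finite subsets of `V` closed under taking subsets. -/
structure SC (V : Type) where
  faces : Set (Finset V)
  down : ∀ s ∈ faces, ∀ t ⊆ s, t ∈ faces

/-- The `i`-dimensional faces of `K` (finsets of cardinality `i + 1`). -/
def SC.Face {V : Type} (K : SC V) (i : ℕ) : Type :=
  {s : Finset V // s ∈ K.faces ∧ s.card = i + 1}

/-- The group of simplicial `i`-chains of `K` with integer coefficients. -/
abbrev SC.Chain {V : Type} (K : SC V) (i : ℕ) : Type := K.Face i →₀ ℤ

/-- The simplicial boundary map `C_{i+1}(K) → C_i(K)`, with signs determined by the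
orientation induced by the linear order on the vertices. -/
noncomputable def SC.bdry {V : Type} [LinearOrder V] (K : SC V) (i : ℕ) :
    K.Chain (i + 1) →ₗ[ℤ] K.Chain i :=
  Finsupp.lift (K.Chain i) ℤ (K.Face (i + 1)) fun s =>
    ∑ v ∈ s.val.attach,
      ((-1 : ℤ) ^ ((s.val.filter (· < v.val)).card)) •
        Finsupp.single
          (⟨s.val.erase v.val,
            K.down s.val s.2.1 _ (Finset.erase_subset _ _),
            by simp [Finset.card_erase_of_mem v.2, s.2.2]⟩ : K.Face i) 1

/-- The simplicial homology group `H_{j+1}(K; ℤ)`: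
`ker (∂ : C_{j+1} → C_j) / im (∂ : C_{j+2} → C_{j+1})`. -/
noncomputable def SC.H {V : Type} [LinearOrder V] (K : SC V) (j : ℕ) : Type :=
  LinearMap.ker (K.bdry j) ⧸
    (LinearMap.range (K.bdry (j + 1))).comap (LinearMap.ker (K.bdry j)).subtype

noncomputable instance {V : Type} [LinearOrder V] (K : SC V) (j : ℕ) :
    AddCommGroup (K.H j) := by unfold SC.H; infer_instance

/-- The embedding of the original vertices into the suspension vertex set
`Fin 2 ⊕ₗ V`, where the two suspension vertices `w₁ = inl 0 < w₂ = inl 1` precede all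
original vertices in the linear order. -/
def suspEmb (V : Type) : V ↪ (Fin 2 ⊕ₗ V) :=
  ⟨fun v => toLex (Sum.inr v), fun a b h => by
    simpa using Sum.inr_injective (toLex.injective h)⟩

/-- The first suspension vertex. -/
def w₁ (V : Type) : Fin 2 ⊕ₗ V := toLex (Sum.inl 0)

/-- The second suspension vertex. -/
def w₂ (V : Type) : Fin 2 ⊕ₗ V := toLex (Sum.inl 1)

/-- The faces of the suspension `SX` of a complex with face set `F`: all faces of `X`
together with their cones over either suspension vertex. -/
def suspFaces {V : Type} [LinearOrder V] (F : Set (Finset V)) : Set (Finset (Fin 2 ⊕ₗ V)) :=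
  {t | ∃ σ ∈ F, t = σ.map (suspEmb V) ∨
        t = insert (w₁ V) (σ.map (suspEmb V)) ∨
        t = insert (w₂ V) (σ.map (suspEmb V))}

theorem w₁_not_mem_map {V : Type} (σ : Finset V) : w₁ V ∉ σ.map (suspEmb V) := by
  simp only [Finset.mem_map, w₁, suspEmb, Function.Embedding.coeFn_mk]
  rintro ⟨v, -, h⟩
  exact Sum.inr_ne_inl (toLex.injective h)

theorem w₂_not_mem_map {V : Type} (σ : Finset V) : w₂ V ∉ σ.map (suspEmb V) := by
  simp only [Finset.mem_map, w₂, suspEmb, Function.Embedding.coeFn_mk]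
  rintro ⟨v, -, h⟩
  exact Sum.inr_ne_inl (toLex.injective h)

/-- The chain map `φ : C_i(X) → C_{i+1}(SX)` sending the oriented simplex
`[v_0, …, v_i]` to `[w₁, v_0, …, v_i] − [w₂, v_0, …, v_i]`. -/
noncomputable def phi {V : Type} [LinearOrder V] (K : SC V)
    (SK : SC (Fin 2 ⊕ₗ V)) (hSK : SK.faces = suspFaces K.faces) (i : ℕ) :
    K.Chain i →ₗ[ℤ] SK.Chain (i + 1) :=
  Finsupp.lift (SK.Chain (i + 1)) ℤ (K.Face i) fun s =>
    Finsupp.single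
      (⟨insert (w₁ V) (s.val.map (suspEmb V)),
        by rw [hSK]; exact ⟨s.val, s.2.1, Or.inr (Or.inl rfl)⟩,
        by rw [Finset.card_insert_of_notMem (w₁_not_mem_map s.val),
               Finset.card_map, s.2.2]⟩ : SK.Face (i + 1)) 1 -
    Finsupp.single
      (⟨insert (w₂ V) (s.val.map (suspEmb V)),
        by rw [hSK]; exact ⟨s.val, s.2.1, Or.inr (Or.inr rfl)⟩,
        by rw [Finset.card_insert_of_notMem (w₂_not_mem_map s.val),
               Finset.card_map, s.2.2]⟩ : SK.Face (i + 1)) 1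

namespace SuspProof

open Finset Finsupp

variable {V : Type} [LinearOrder V]

/-- generic suspension vertex -/
def wv (V : Type) (k : Fin 2) : Fin 2 ⊕ₗ V := toLex (Sum.inl k)

lemma wv_zero : wv V 0 = w₁ V := rfl
lemma wv_one : wv V 1 = w₂ V := rfl

lemma wv_lt (k : Fin 2) (v : V) : wv V k < suspEmb V v := Sum.Lex.inl_lt_inr _ _

lemma wv_ne_emb (k : Fin 2) (v : V) : wv V k ≠ suspEmb V v := ne_of_lt (wv_lt k v)

lemma wv_inj {k k' : Fin 2} (h : wv V k = wv V k') : k = k' := by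
  simpa using Sum.inl_injective (toLex.injective h)

lemma wv_not_mem_map (k : Fin 2) (σ : Finset V) : wv V k ∉ σ.map (suspEmb V) := by
  simp only [Finset.mem_map]
  rintro ⟨v, -, h⟩
  exact wv_ne_emb k v h.symm

lemma emb_lt_iff (a b : V) : suspEmb V a < suspEmb V b ↔ a < b := by
  show toLex (Sum.inr a) < toLex (Sum.inr b) ↔ _
  exact Sum.Lex.inr_lt_inr_iff

/-- preimage of a suspension face under the embedding -/
noncomputable def pre (t : Finset (Fin 2 ⊕ₗ V)) : Finset V :=
  haveI := Classical.decEq V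
  t.preimage (suspEmb V) (Set.injOn_of_injective (suspEmb V).injective)

lemma mem_pre {t : Finset (Fin 2 ⊕ₗ V)} {x : V} : x ∈ pre t ↔ suspEmb V x ∈ t :=
  Finset.mem_preimage

lemma pre_map (σ : Finset V) : pre (σ.map (suspEmb V)) = σ := by
  ext x; simp [mem_pre]

lemma pre_insert_wv (k : Fin 2) (t : Finset (Fin 2 ⊕ₗ V)) :
    pre (insert (wv V k) t) = pre t := by
  ext x
  simp only [mem_pre, Finset.mem_insert]
  constructor
  · rintro (h | h)
    · exact absurd h.symm (wv_ne_emb k x)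
    · exact h
  · exact fun h => Or.inr h

lemma form_wv {F : Set (Finset V)} {t : Finset (Fin 2 ⊕ₗ V)} (ht : t ∈ suspFaces F)
    (k : Fin 2) (hk : wv V k ∈ t) :
    pre t ∈ F ∧ t = insert (wv V k) ((pre t).map (suspEmb V)) := by
  obtain ⟨σ, hσ, h | h | h⟩ := ht
  · subst h; exact absurd hk (wv_not_mem_map k σ)
  · subst h
    have hk0 : k = 0 := by
      rcases Finset.mem_insert.1 hk with h' | h'
      · exact wv_inj (h'.trans wv_zero.symm)
      · exact absurd h' (wv_not_mem_map k σ)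
    subst hk0
    rw [← wv_zero, pre_insert_wv, pre_map]
    exact ⟨hσ, rfl⟩
  · subst h
    have hk1 : k = 1 := by
      rcases Finset.mem_insert.1 hk with h' | h'
      · exact wv_inj (h'.trans wv_one.symm)
      · exact absurd h' (wv_not_mem_map k σ)
    subst hk1
    rw [← wv_one, pre_insert_wv, pre_map]
    exact ⟨hσ, rfl⟩

lemma form_emb {F : Set (Finset V)} {t : Finset (Fin 2 ⊕ₗ V)} (ht : t ∈ suspFaces F)
    (h0 : wv V 0 ∉ t) (h1 : wv V 1 ∉ t) :
    pre t ∈ F ∧ t = (pre t).map (suspEmb V) := by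
  obtain ⟨σ, hσ, h | h | h⟩ := ht
  · subst h; rw [pre_map]; exact ⟨hσ, rfl⟩
  · subst h; exact absurd (Finset.mem_insert_self _ _) (by rw [wv_zero] at h0; exact h0)
  · subst h; exact absurd (Finset.mem_insert_self _ _) (by rw [wv_one] at h1; exact h1)

end SuspProof
namespace SuspProof

set_option linter.unusedSectionVars false

open Finset Finsupp

variable {V : Type} [LinearOrder V] (K : SC V) (SK : SC (Fin 2 ⊕ₗ V))
  (hSK : SK.faces = suspFaces K.faces)

def mapFace (i : ℕ) (s : K.Face i) : SK.Face i :=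
  ⟨s.val.map (suspEmb V),
   by rw [hSK]; exact ⟨s.val, s.2.1, Or.inl rfl⟩,
   by rw [Finset.card_map, s.2.2]⟩

def coneFace (k : Fin 2) (i : ℕ) (s : K.Face i) : SK.Face (i + 1) :=
  ⟨insert (wv V k) (s.val.map (suspEmb V)),
   by
     rw [hSK]
     refine ⟨s.val, s.2.1, ?_⟩
     fin_cases k
     · exact Or.inr (Or.inl rfl)
     · exact Or.inr (Or.inr rfl),
   by rw [Finset.card_insert_of_notMem (wv_not_mem_map k s.val),
          Finset.card_map, s.2.2]⟩

noncomputable def iota (i : ℕ) : K.Chain i →ₗ[ℤ] SK.Chain i :=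
  Finsupp.lift _ ℤ _ fun s => Finsupp.single (mapFace K SK hSK i s) 1

noncomputable def cone (k : Fin 2) (i : ℕ) : K.Chain i →ₗ[ℤ] SK.Chain (i + 1) :=
  Finsupp.lift _ ℤ _ fun s => Finsupp.single (coneFace K SK hSK k i s) 1

include hSK in
lemma card_pre_of_wv {i : ℕ} (t : SK.Face (i + 1)) (k : Fin 2) (hk : wv V k ∈ t.val) :
    (pre t.val).card = i + 1 := by
  have h := (form_wv (by rw [← hSK]; exact t.2.1) k hk).2
  have hc : t.val.card = i + 2 := t.2.2
  rw [h, Finset.card_insert_of_notMem (wv_not_mem_map k _), Finset.card_map] at hc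
  omega

include hSK in
lemma card_pre_of_emb {i : ℕ} (t : SK.Face i) (h0 : wv V 0 ∉ t.val) (h1 : wv V 1 ∉ t.val) :
    (pre t.val).card = i + 1 := by
  have h := (form_emb (by rw [← hSK]; exact t.2.1) h0 h1).2
  have hc : t.val.card = i + 1 := t.2.2
  rw [h, Finset.card_map] at hc
  exact hc

noncomputable def pr0 (i : ℕ) : SK.Chain i →ₗ[ℤ] K.Chain i :=
  Finsupp.lift _ ℤ _ fun t =>
    if h : wv V 0 ∈ t.val ∨ wv V 1 ∈ t.val then 0
    else Finsupp.single
      (⟨pre t.val, (form_emb (by rw [← hSK]; exact t.2.1) (fun c => h (Or.inl c))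
          (fun c => h (Or.inr c))).1,
        card_pre_of_emb K SK hSK t (fun c => h (Or.inl c)) (fun c => h (Or.inr c))⟩ : K.Face i) 1

noncomputable def prc (k : Fin 2) (i : ℕ) : SK.Chain (i + 1) →ₗ[ℤ] K.Chain i :=
  Finsupp.lift _ ℤ _ fun t =>
    if h : wv V k ∈ t.val then
      Finsupp.single
        (⟨pre t.val, (form_wv (by rw [← hSK]; exact t.2.1) k h).1,
          card_pre_of_wv K SK hSK t k h⟩ : K.Face i) 1
    else 0

lemma lift_single {α X : Type} (f : X → (α →₀ ℤ)) (x : X) (c : ℤ) :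
    Finsupp.lift (α →₀ ℤ) ℤ X f (Finsupp.single x c) = c • f x := by
  rw [Finsupp.lift_apply, Finsupp.sum_single_index]
  rw [zero_smul]

lemma iota_single (i : ℕ) (s : K.Face i) (c : ℤ) :
    iota K SK hSK i (Finsupp.single s c) = Finsupp.single (mapFace K SK hSK i s) c := by
  rw [iota, lift_single, Finsupp.smul_single', mul_one]

lemma cone_single (k : Fin 2) (i : ℕ) (s : K.Face i) (c : ℤ) :
    cone K SK hSK k i (Finsupp.single s c) =
      Finsupp.single (coneFace K SK hSK k i s) c := by
  rw [cone, lift_single, Finsupp.smul_single', mul_one]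

lemma bdry_single (L : SC V) (i : ℕ) (s : L.Face (i + 1)) :
    L.bdry i (Finsupp.single s 1) =
      ∑ v ∈ s.val.attach,
        ((-1 : ℤ) ^ ((s.val.filter (· < v.val)).card)) •
          Finsupp.single
            (⟨s.val.erase v.val,
              L.down s.val s.2.1 _ (Finset.erase_subset _ _),
              by simp [Finset.card_erase_of_mem v.2, s.2.2]⟩ : L.Face i) 1 := by
  rw [SC.bdry, lift_single, one_smul]
  rfl

end SuspProof
namespace SuspProof

set_option linter.unusedSectionVars false
set_option maxHeartbeats 1000000

open Finset Finsupp

variable {V : Type} [LinearOrder V] (K : SC V) (SK : SC (Fin 2 ⊕ₗ V))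
  (hSK : SK.faces = suspFaces K.faces)

lemma smul_single_congr {α : Type} {a b : ℤ} {x y : α} (h1 : a = b) (h2 : x = y) :
    a • Finsupp.single x (1 : ℤ) = b • Finsupp.single y 1 := by rw [h1, h2]

lemma smul_single_one {α : Type} {a : ℤ} {x y : α} (h1 : a = 1) (h2 : x = y) :
    a • Finsupp.single x (1 : ℤ) = Finsupp.single y 1 := by rw [h1, h2, one_smul]

lemma sum_attach_map {α β M : Type*} [AddCommMonoid M] (s : Finset α) (f : α ↪ β)
    (F : {x // x ∈ s.map f} → M) :
    ∑ x ∈ (s.map f).attach, F x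
      = ∑ x ∈ s.attach, F ⟨f x.1, Finset.mem_map_of_mem f x.2⟩ := by
  refine (Finset.sum_bij (fun (x : {x // x ∈ s}) _ =>
      (⟨f x.1, Finset.mem_map_of_mem f x.2⟩ : {x // x ∈ s.map f})) ?_ ?_ ?_ ?_).symm
  · intro a ha; exact Finset.mem_attach _ _
  · intro a₁ _ a₂ _ h
    exact Subtype.ext (f.injective (congrArg Subtype.val h))
  · intro b _
    obtain ⟨a, ha, hab⟩ := Finset.mem_map.1 b.2
    exact ⟨⟨a, ha⟩, Finset.mem_attach _ _, Subtype.ext hab⟩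
  · intro a _; rfl

lemma sum_attach_insert {β M : Type*} [DecidableEq β] [AddCommMonoid M] (t : Finset β)
    (w : β) (hw : w ∉ t) (G : {x // x ∈ insert w t} → M) :
    ∑ x ∈ (insert w t).attach, G x
      = G ⟨w, Finset.mem_insert_self _ _⟩
        + ∑ v ∈ t.attach, G ⟨v.1, Finset.mem_insert_of_mem v.2⟩ := by
  rw [Finset.attach_insert, Finset.sum_insert (by
      simp only [Finset.mem_image]
      rintro ⟨x, -, hx⟩
      exact hw ((show (x : β) = w from congrArg Subtype.val hx) ▸ x.2)),
    Finset.sum_image (by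
      intro x _ y _ h
      have h' := congrArg Subtype.val h
      exact Subtype.ext h')]

lemma filter_lt_map_card (σ : Finset V) (v : V) :
    ((σ.map (suspEmb V)).filter (· < suspEmb V v)).card = (σ.filter (· < v)).card := by
  rw [Finset.filter_map, Finset.card_map]
  congr 1
  apply Finset.filter_congr
  intro x _
  simp only [Function.comp_apply]
  constructor
  · intro h; simpa using (emb_lt_iff x v).1 (by simpa using h)
  · intro h; simpa using (emb_lt_iff x v).2 (by simpa using h)

lemma filter_lt_wv_eq_empty (k : Fin 2) (σ : Finset V) :
    (insert (wv V k) (σ.map (suspEmb V))).filter (· < wv V k) = ∅ := by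
  apply Finset.filter_eq_empty_iff.2
  intro x hx
  rcases Finset.mem_insert.1 hx with rfl | hx
  · exact lt_irrefl _
  · obtain ⟨v, -, rfl⟩ := Finset.mem_map.1 hx
    exact fun h => absurd (wv_lt k v) (not_lt_of_gt h)

lemma filter_lt_insert_card (k : Fin 2) (σ : Finset V) (v : V) :
    ((insert (wv V k) (σ.map (suspEmb V))).filter (· < suspEmb V v)).card
      = (σ.filter (· < v)).card + 1 := by
  rw [Finset.filter_insert, if_pos (wv_lt k v)]
  rw [Finset.card_insert_of_notMem
    (fun h => wv_not_mem_map k σ (Finset.mem_of_mem_filter _ h))]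
  rw [filter_lt_map_card]

include hSK in
lemma bdry_comp_iota (i : ℕ) :
    (SK.bdry i).comp (iota K SK hSK (i + 1)) = (iota K SK hSK i).comp (K.bdry i) := by
  apply Finsupp.lhom_ext
  intro s b
  have hb : (Finsupp.single s b : K.Chain (i + 1)) = b • Finsupp.single s 1 := by
    rw [Finsupp.smul_single', mul_one]
  rw [LinearMap.comp_apply, LinearMap.comp_apply, hb, map_smul, map_smul, map_smul, map_smul]
  congr 1
  rw [iota_single, bdry_single, bdry_single]
  erw [map_sum]
  refine Eq.trans (sum_attach_map s.val (suspEmb V) _) ?_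
  apply Finset.sum_congr rfl
  intro v _
  erw [map_smul, iota_single]
  refine smul_single_congr ?_ ?_
  · show ((-1 : ℤ) ^ ((s.val.map (suspEmb V)).filter (· < suspEmb V v.1)).card) = _
    rw [filter_lt_map_card]
  · refine Subtype.ext ?_
    convert (Finset.map_erase (suspEmb V) s.val v.1).symm using 2 <;> rfl

include hSK in
lemma bdry_comp_cone (k : Fin 2) (i : ℕ) :
    (SK.bdry (i + 1)).comp (cone K SK hSK k (i + 1))
      = iota K SK hSK (i + 1) - (cone K SK hSK k i).comp (K.bdry i) := by
  apply Finsupp.lhom_ext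
  intro s b
  have hb : (Finsupp.single s b : K.Chain (i + 1)) = b • Finsupp.single s 1 := by
    rw [Finsupp.smul_single', mul_one]
  rw [LinearMap.comp_apply, LinearMap.sub_apply, LinearMap.comp_apply, hb,
    map_smul, map_smul, map_smul, map_smul, map_smul, ← smul_sub]
  congr 1
  rw [cone_single, bdry_single, iota_single, bdry_single]
  erw [map_sum]
  refine Eq.trans (sum_attach_insert (s.val.map (suspEmb V)) (wv V k)
    (wv_not_mem_map k s.val) _) ?_
  rw [sub_eq_add_neg, ← Finset.sum_neg_distrib]
  refine congrArg₂ (· + ·) ?_ ?_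
  · refine smul_single_one ?_ (Subtype.ext ?_)
    · show ((-1 : ℤ) ^ ((insert (wv V k) (s.val.map (suspEmb V))).filter
          (· < wv V k)).card) = 1
      rw [filter_lt_wv_eq_empty, Finset.card_empty, pow_zero]
    · show _ = (mapFace K SK hSK (i + 1) s).val
      convert Finset.erase_insert (wv_not_mem_map k s.val) using 2 <;> rfl
  · refine Eq.trans (sum_attach_map s.val (suspEmb V) _) ?_
    apply Finset.sum_congr rfl
    intro v _
    erw [map_smul, cone_single]
    refine Eq.trans (smul_single_congr ?_ (Subtype.ext ?_)) (neg_smul _ _)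
    · show ((-1 : ℤ) ^ ((insert (wv V k) (s.val.map (suspEmb V))).filter
          (· < suspEmb V v.1)).card) = -((-1 : ℤ) ^ ((s.val.filter (· < v.1)).card))
      rw [filter_lt_insert_card, pow_succ]
      ring
    · show _ = (coneFace K SK hSK k i ⟨s.val.erase v.1,
          K.down s.val s.2.1 _ (Finset.erase_subset _ _),
          by simp [Finset.card_erase_of_mem v.2, s.2.2]⟩).val
      convert (Finset.erase_insert_of_ne (wv_ne_emb k v.1)).trans
        (congrArg (insert (wv V k)) (Finset.map_erase (suspEmb V) s.val v.1).symm) using 2 <;> rfl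

end SuspProof
namespace SuspProof

set_option linter.unusedSectionVars false
set_option maxHeartbeats 1000000

open Finset Finsupp

variable {V : Type} [LinearOrder V] (K : SC V) (SK : SC (Fin 2 ⊕ₗ V))
  (hSK : SK.faces = suspFaces K.faces)

include hSK in
lemma pr0_comp_iota (i : ℕ) :
    (pr0 K SK hSK i).comp (iota K SK hSK i) = LinearMap.id := by
  apply Finsupp.lhom_ext
  intro s b
  rw [LinearMap.comp_apply, LinearMap.id_apply, iota_single, pr0, lift_single]
  rw [dif_neg (fun h => h.elim (wv_not_mem_map 0 s.val) (wv_not_mem_map 1 s.val))]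
  erw [Finsupp.smul_single', mul_one]
  exact congrArg (fun z => Finsupp.single z b) (Subtype.ext (pre_map s.val))

include hSK in
lemma pr0_comp_cone (k : Fin 2) (i : ℕ) :
    (pr0 K SK hSK (i + 1)).comp (cone K SK hSK k i) = 0 := by
  apply Finsupp.lhom_ext
  intro s b
  rw [LinearMap.comp_apply, LinearMap.zero_apply, cone_single, pr0, lift_single]
  rw [dif_pos (by
    fin_cases k
    · exact Or.inl (Finset.mem_insert_self _ _)
    · exact Or.inr (Finset.mem_insert_self _ _))]
  rw [smul_zero]

include hSK in
lemma prc_comp_cone_same (k : Fin 2) (i : ℕ) :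
    (prc K SK hSK k i).comp (cone K SK hSK k i) = LinearMap.id := by
  apply Finsupp.lhom_ext
  intro s b
  rw [LinearMap.comp_apply, LinearMap.id_apply, cone_single, prc, lift_single]
  rw [dif_pos (show wv V k ∈ (coneFace K SK hSK k i s).val from Finset.mem_insert_self _ _)]
  erw [Finsupp.smul_single', mul_one]
  exact congrArg (fun z => Finsupp.single z b)
    (Subtype.ext ((pre_insert_wv k _).trans (pre_map s.val)))

include hSK in
lemma prc_comp_cone_ne (k k' : Fin 2) (h : k ≠ k') (i : ℕ) :
    (prc K SK hSK k i).comp (cone K SK hSK k' i) = 0 := by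
  apply Finsupp.lhom_ext
  intro s b
  rw [LinearMap.comp_apply, LinearMap.zero_apply, cone_single, prc, lift_single]
  rw [dif_neg (show wv V k ∉ (coneFace K SK hSK k' i s).val from fun hm =>
    (Finset.mem_insert.1 hm).elim (fun hh => h (wv_inj hh)) (wv_not_mem_map k s.val))]
  rw [smul_zero]

include hSK in
lemma prc_comp_iota (k : Fin 2) (i : ℕ) :
    (prc K SK hSK k i).comp (iota K SK hSK (i + 1)) = 0 := by
  apply Finsupp.lhom_ext
  intro s b
  rw [LinearMap.comp_apply, LinearMap.zero_apply, iota_single, prc, lift_single]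
  rw [dif_neg (show wv V k ∉ (mapFace K SK hSK (i + 1) s).val from wv_not_mem_map k s.val)]
  rw [smul_zero]

include hSK in
lemma phi_eq (i : ℕ) :
    phi K SK hSK i = cone K SK hSK 0 i - cone K SK hSK 1 i := by
  apply Finsupp.lhom_ext
  intro s b
  rw [LinearMap.sub_apply, cone_single, cone_single, phi, lift_single]
  erw [smul_sub, Finsupp.smul_single', Finsupp.smul_single', mul_one]
  refine congrArg₂ (· - ·) ?_ ?_
  · exact congrArg (fun z => Finsupp.single z b) (Subtype.ext rfl)
  · exact congrArg (fun z => Finsupp.single z b) (Subtype.ext rfl)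

include hSK in
lemma decomp (i : ℕ) (z : SK.Chain (i + 1)) :
    ∃ a b c, z = iota K SK hSK (i + 1) a + cone K SK hSK 0 i b + cone K SK hSK 1 i c := by
  induction z using Finsupp.induction_linear with
  | zero => exact ⟨0, 0, 0, by simp⟩
  | add f g hf hg =>
      obtain ⟨a, b, c, rfl⟩ := hf
      obtain ⟨a', b', c', rfl⟩ := hg
      exact ⟨a + a', b + b', c + c', by simp only [map_add]; abel⟩
  | single t cc =>
      have ht : t.val ∈ suspFaces K.faces := by rw [← hSK]; exact t.2.1
      by_cases h0 : wv V 0 ∈ t.val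
      · refine ⟨0, Finsupp.single ⟨pre t.val, (form_wv ht 0 h0).1,
          card_pre_of_wv K SK hSK t 0 h0⟩ cc, 0, ?_⟩
        rw [map_zero, map_zero]
        erw [cone_single]
        simp only [zero_add, add_zero]
        exact congrArg (fun z => Finsupp.single z cc) (Subtype.ext (form_wv ht 0 h0).2)
      · by_cases h1 : wv V 1 ∈ t.val
        · refine ⟨0, 0, Finsupp.single ⟨pre t.val, (form_wv ht 1 h1).1,
            card_pre_of_wv K SK hSK t 1 h1⟩ cc, ?_⟩
          rw [map_zero, map_zero]
          erw [cone_single]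
          simp only [zero_add, add_zero]
          exact congrArg (fun z => Finsupp.single z cc) (Subtype.ext (form_wv ht 1 h1).2)
        · refine ⟨Finsupp.single ⟨pre t.val, (form_emb ht h0 h1).1,
            card_pre_of_emb K SK hSK t h0 h1⟩ cc, 0, 0, ?_⟩
          rw [map_zero, map_zero]
          erw [iota_single]
          simp only [zero_add, add_zero]
          exact congrArg (fun z => Finsupp.single z cc) (Subtype.ext (form_emb ht h0 h1).2)

end SuspProof
namespace SuspProof

set_option linter.unusedSectionVars false
set_option maxHeartbeats 1000000

open Finset Finsupp LinearMap

variable {V : Type} [LinearOrder V] (K : SC V) (SK : SC (Fin 2 ⊕ₗ V))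
  (hSK : SK.faces = suspFaces K.faces)

include hSK in
lemma bdry_phi (i : ℕ) (x : K.Chain (i + 1)) :
    SK.bdry (i + 1) (phi K SK hSK (i + 1) x) = -(phi K SK hSK i (K.bdry i x)) := by
  have h0 := LinearMap.congr_fun (bdry_comp_cone K SK hSK 0 i) x
  have h1 := LinearMap.congr_fun (bdry_comp_cone K SK hSK 1 i) x
  simp only [LinearMap.comp_apply, LinearMap.sub_apply] at h0 h1
  rw [phi_eq K SK hSK (i + 1), phi_eq K SK hSK i]
  simp only [LinearMap.sub_apply, map_sub]
  rw [h0, h1]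
  abel

include hSK in
lemma phi_mem_ker (j : ℕ) : ∀ x ∈ LinearMap.ker (K.bdry j),
    phi K SK hSK (j + 1) x ∈ LinearMap.ker (SK.bdry (j + 1)) := by
  intro x hx
  rw [LinearMap.mem_ker] at hx ⊢
  rw [bdry_phi K SK hSK j x, hx, map_zero, neg_zero]

-- pointwise projection identities
include hSK in
lemma Pid (m : ℕ) (y : K.Chain m) : pr0 K SK hSK m (iota K SK hSK m y) = y := by
  have := LinearMap.congr_fun (pr0_comp_iota K SK hSK m) y
  simpa using this

include hSK in
lemma P0c (k : Fin 2) (m : ℕ) (y : K.Chain m) :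
    pr0 K SK hSK (m + 1) (cone K SK hSK k m y) = 0 := by
  have := LinearMap.congr_fun (pr0_comp_cone K SK hSK k m) y
  simpa using this

include hSK in
lemma Pcc (k : Fin 2) (m : ℕ) (y : K.Chain m) :
    prc K SK hSK k m (cone K SK hSK k m y) = y := by
  have := LinearMap.congr_fun (prc_comp_cone_same K SK hSK k m) y
  simpa using this

include hSK in
lemma Pcne (k k' : Fin 2) (h : k ≠ k') (m : ℕ) (y : K.Chain m) :
    prc K SK hSK k m (cone K SK hSK k' m y) = 0 := by
  have := LinearMap.congr_fun (prc_comp_cone_ne K SK hSK k k' h m) y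
  simpa using this

include hSK in
lemma Pci (k : Fin 2) (m : ℕ) (y : K.Chain (m + 1)) :
    prc K SK hSK k m (iota K SK hSK (m + 1) y) = 0 := by
  have := LinearMap.congr_fun (prc_comp_iota K SK hSK k m) y
  simpa using this

include hSK in
lemma hparts (j : ℕ) (a : K.Chain (j + 2)) (b c : K.Chain (j + 1))
    (hz : SK.bdry (j + 1) (iota K SK hSK (j + 2) a + cone K SK hSK 0 (j + 1) b
      + cone K SK hSK 1 (j + 1) c) = 0) :
    K.bdry j b = 0 ∧ K.bdry j c = 0 ∧ K.bdry (j + 1) a + b + c = 0 := by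
  have ei := LinearMap.congr_fun (bdry_comp_iota K SK hSK (j + 1)) a
  have e0 := LinearMap.congr_fun (bdry_comp_cone K SK hSK 0 j) b
  have e1 := LinearMap.congr_fun (bdry_comp_cone K SK hSK 1 j) c
  simp only [LinearMap.comp_apply, LinearMap.sub_apply] at ei e0 e1
  rw [map_add, map_add, ei, e0, e1] at hz
  refine ⟨?_, ?_, ?_⟩
  · have h := congrArg (prc K SK hSK 0 j) hz
    simp only [map_add, map_sub, map_zero, Pci K SK hSK, Pcc K SK hSK,
      Pcne K SK hSK 0 1 (by decide), P0c K SK hSK, zero_add, add_zero, zero_sub,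
      sub_zero, neg_eq_zero] at h
    exact h
  · have h := congrArg (prc K SK hSK 1 j) hz
    simp only [map_add, map_sub, map_zero, Pci K SK hSK, Pcc K SK hSK,
      Pcne K SK hSK 1 0 (by decide), P0c K SK hSK, zero_add, add_zero, zero_sub,
      sub_zero, neg_eq_zero] at h
    exact h
  · have h := congrArg (pr0 K SK hSK (j + 1)) hz
    simp only [map_add, map_sub, map_zero, Pid K SK hSK, P0c K SK hSK, zero_add,
      add_zero, sub_zero] at h
    exact h

include hSK in
lemma prc_mem_ker (j : ℕ) : ∀ z ∈ LinearMap.ker (SK.bdry (j + 1)),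
    prc K SK hSK 0 (j + 1) z ∈ LinearMap.ker (K.bdry j) := by
  intro z hz
  obtain ⟨a, b, c, rfl⟩ := decomp K SK hSK (j + 1) z
  rw [LinearMap.mem_ker] at hz
  have hp := hparts K SK hSK j a b c hz
  have hb : prc K SK hSK 0 (j + 1) (iota K SK hSK (j + 2) a + cone K SK hSK 0 (j + 1) b
      + cone K SK hSK 1 (j + 1) c) = b := by
    rw [map_add, map_add, Pci K SK hSK 0 (j + 1) a, Pcc K SK hSK 0 (j + 1) b,
      Pcne K SK hSK 0 1 (by decide) (j + 1) c, zero_add, add_zero]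
  rw [LinearMap.mem_ker, hb]
  exact hp.1

noncomputable def fmap (j : ℕ) :
    LinearMap.ker (K.bdry j) →ₗ[ℤ] LinearMap.ker (SK.bdry (j + 1)) :=
  (phi K SK hSK (j + 1)).restrict (phi_mem_ker K SK hSK j)

noncomputable def gmap (j : ℕ) :
    LinearMap.ker (SK.bdry (j + 1)) →ₗ[ℤ] LinearMap.ker (K.bdry j) :=
  (prc K SK hSK 0 (j + 1)).restrict (prc_mem_ker K SK hSK j)

include hSK in
lemma gf_id (j : ℕ) (x : LinearMap.ker (K.bdry j)) :
    gmap K SK hSK j (fmap K SK hSK j x) = x := by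
  apply Subtype.ext
  show prc K SK hSK 0 (j + 1) (phi K SK hSK (j + 1) x.val) = x.val
  rw [phi_eq K SK hSK (j + 1), LinearMap.sub_apply, map_sub,
    Pcc K SK hSK 0 (j + 1), Pcne K SK hSK 0 1 (by decide) (j + 1), sub_zero]

include hSK in
lemma fg_sub_mem (j : ℕ) (z : LinearMap.ker (SK.bdry (j + 1))) :
    ((fmap K SK hSK j) ((gmap K SK hSK j) z)).val - z.val
      ∈ LinearMap.range (SK.bdry (j + 2)) := by
  obtain ⟨a, b, c, hzv⟩ := decomp K SK hSK (j + 1) z.val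
  have hp := hparts K SK hSK j a b c (by rw [← hzv]; exact LinearMap.mem_ker.1 z.2)
  have hb : prc K SK hSK 0 (j + 1) z.val = b := by
    rw [hzv, map_add, map_add, Pci K SK hSK 0 (j + 1) a, Pcc K SK hSK 0 (j + 1) b,
      Pcne K SK hSK 0 1 (by decide) (j + 1) c, zero_add, add_zero]
  have hbc : b + c = -(K.bdry (j + 1) a) := by
    have h' := hp.2.2
    rw [add_assoc] at h'
    exact eq_neg_of_add_eq_zero_right h'
  refine ⟨-(cone K SK hSK 1 (j + 2) a), ?_⟩
  have e1 := LinearMap.congr_fun (bdry_comp_cone K SK hSK 1 (j + 1)) a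
  simp only [LinearMap.comp_apply, LinearMap.sub_apply] at e1
  rw [map_neg, e1]
  show _ = phi K SK hSK (j + 1) (prc K SK hSK 0 (j + 1) z.val) - z.val
  rw [hb, hzv, phi_eq K SK hSK (j + 1), LinearMap.sub_apply]
  have hca : cone K SK hSK 1 (j + 1) (K.bdry (j + 1) a)
      = -(cone K SK hSK 1 (j + 1) b + cone K SK hSK 1 (j + 1) c) := by
    rw [← map_add, hbc, map_neg, neg_neg]
  rw [hca]
  abel

end SuspProof
/-- Suspension isomorphism: for a finite simplicial complex `X` with orientation induced
by a linear order on its vertices, and its suspension `SX` with the two suspension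
vertices placed before all vertices of `X`, the chain map
`φ : C_i(X) → C_{i+1}(SX)`, `[v_0,…,v_i] ↦ [w₁,v_0,…,v_i] − [w₂,v_0,…,v_i]`, sends
cycles to cycles and boundaries to boundaries and induces an isomorphism
`H_i(X; ℤ) ≅ H_{i+1}(SX; ℤ)` for every `i = j + 1 > 0`. -/
theorem suspension_homology_iso {V : Type} [LinearOrder V] [Fintype V] (K : SC V)
    (SK : SC (Fin 2 ⊕ₗ V)) (hSK : SK.faces = suspFaces K.faces) (j : ℕ) :
    ∃ hker : ∀ x ∈ LinearMap.ker (K.bdry j),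
        phi K SK hSK (j + 1) x ∈ LinearMap.ker (SK.bdry (j + 1)),
      (∀ x ∈ LinearMap.range (K.bdry (j + 1)),
        phi K SK hSK (j + 1) x ∈ LinearMap.range (SK.bdry (j + 2))) ∧
      ∃ e : K.H j ≃+ SK.H (j + 1),
        ∀ (x : K.Chain (j + 1)) (hx : x ∈ LinearMap.ker (K.bdry j)),
          e (Submodule.Quotient.mk ⟨x, hx⟩) =
            Submodule.Quotient.mk ⟨phi K SK hSK (j + 1) x, hker x hx⟩ := by
  open SuspProof in
  refine ⟨phi_mem_ker K SK hSK j, ?_, ?_⟩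
  · intro x hx
    obtain ⟨A, rfl⟩ := hx
    exact ⟨-(phi K SK hSK (j + 2) A), by
      rw [map_neg, SuspProof.bdry_phi K SK hSK (j + 1) A, neg_neg]⟩
  · -- the isomorphism
    set Zk := LinearMap.ker (K.bdry j) with hZk
    set ZS := LinearMap.ker (SK.bdry (j + 1)) with hZS
    set Bk := (LinearMap.range (K.bdry (j + 1))).comap Zk.subtype with hBkdef
    set BS := (LinearMap.range (SK.bdry (j + 2))).comap ZS.subtype with hBSdef
    have hBk : Bk ≤ Submodule.comap (SuspProof.fmap K SK hSK j) BS := by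
      intro x hx
      rw [hBkdef, Submodule.mem_comap] at hx
      obtain ⟨A, hA⟩ := hx
      rw [Submodule.mem_comap, hBSdef, Submodule.mem_comap]
      refine ⟨-(phi K SK hSK (j + 2) A), ?_⟩
      have h1 : SK.bdry (j + 2) (-(phi K SK hSK (j + 2) A))
          = phi K SK hSK (j + 1) (K.bdry (j + 1) A) := by
        rw [map_neg, SuspProof.bdry_phi K SK hSK (j + 1) A, neg_neg]
      rw [h1, hA]
      rfl
    have hBS : BS ≤ Submodule.comap (SuspProof.gmap K SK hSK j) Bk := by
      intro z hz
      rw [hBSdef, Submodule.mem_comap] at hz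
      obtain ⟨Z, hZ⟩ := hz
      obtain ⟨A, B, C, rfl⟩ := SuspProof.decomp K SK hSK (j + 2) Z
      rw [Submodule.mem_comap, hBkdef, Submodule.mem_comap]
      refine ⟨-B, ?_⟩
      have ei := LinearMap.congr_fun (SuspProof.bdry_comp_iota K SK hSK (j + 2)) A
      have e0 := LinearMap.congr_fun (SuspProof.bdry_comp_cone K SK hSK 0 (j + 1)) B
      have e1 := LinearMap.congr_fun (SuspProof.bdry_comp_cone K SK hSK 1 (j + 1)) C
      simp only [LinearMap.comp_apply, LinearMap.sub_apply] at ei e0 e1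
      have key : SuspProof.prc K SK hSK 0 (j + 1) (ZS.subtype z) = -(K.bdry (j + 1) B) := by
        rw [← hZ]
        simp only [map_add]
        rw [ei, e0, e1]
        simp only [map_add, map_sub, SuspProof.Pci K SK hSK, SuspProof.Pcc K SK hSK,
          SuspProof.Pcne K SK hSK 0 1 (by decide), zero_add, add_zero, zero_sub, sub_zero]
      rw [map_neg]
      exact key.symm
    refine ⟨{ toFun := Submodule.mapQ Bk BS (SuspProof.fmap K SK hSK j) hBk,
              invFun := Submodule.mapQ BS Bk (SuspProof.gmap K SK hSK j) hBS,
              left_inv := ?_, right_inv := ?_,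
              map_add' := map_add _ }, ?_⟩
    · intro q
      obtain ⟨x, rfl⟩ := Submodule.Quotient.mk_surjective Bk q
      rw [Submodule.mapQ_apply, Submodule.mapQ_apply]
      exact congrArg _ (SuspProof.gf_id K SK hSK j x)
    · intro q
      obtain ⟨z, rfl⟩ := Submodule.Quotient.mk_surjective BS q
      rw [Submodule.mapQ_apply, Submodule.mapQ_apply]
      refine (Submodule.Quotient.eq BS).2 ?_
      rw [hBSdef, Submodule.mem_comap]
      exact SuspProof.fg_sub_mem K SK hSK j z
    · intro x hx
      show Submodule.mapQ Bk BS (SuspProof.fmap K SK hSK j) hBk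
          (Submodule.Quotient.mk ⟨x, hx⟩) = _
      rw [Submodule.mapQ_apply]
      exact congrArg _ (Subtype.ext rfl)
end

section
/- Let d ≥ 2 and let G_1, G_2 be abelian groups given by presentations G_1 = ⟨γ_0,...,γ_n | 2γ_0 = γ_1, ..., 2γ_{n−1} = γ_n⟩ and G_2 = ⟨τ_1,...,τ_k | τ_1 + ... + τ_k = 0⟩, and let 0 ≤ n_1 < n_2 < ... < n_k ≤ n. Then the quotient of G_1 ⊕ G_2 by the subgroup generated by the elements (γ_{n_i}, −τ_i), i = 1, ..., k, has torsion subgroup isomorphic to Z/(2^{n_1} + ... + 2^{n_k})Z. -/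
/-- `G₁ = ⟨γ_0,…,γ_n ∣ 2γ_0 = γ_1, …, 2γ_{n−1} = γ_n⟩`, as the quotient of `ℤ^{n+1}`
by the subgroup generated by the vectors `2e_i − e_{i+1}`. -/
def PresG1 (n : ℕ) : Type :=
  (Fin (n + 1) → ℤ) ⧸ AddSubgroup.closure
    {v | ∃ j : Fin n, v = 2 • Pi.single (Fin.castSucc j) (1 : ℤ) - Pi.single j.succ 1}

instance (n : ℕ) : AddCommGroup (PresG1 n) := by unfold PresG1; infer_instance

/-- `G₂ = ⟨τ_1,…,τ_k ∣ τ_1 + ⋯ + τ_k = 0⟩`, as the quotient of `ℤ^k` by the subgroup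
generated by `e_1 + ⋯ + e_k`. -/
def PresG2 (k : ℕ) : Type :=
  (Fin k → ℤ) ⧸ AddSubgroup.closure {∑ i : Fin k, Pi.single i (1 : ℤ)}

instance (k : ℕ) : AddCommGroup (PresG2 k) := by unfold PresG2; infer_instance

/-- The class `γ_i ∈ G₁` of the `i`-th standard generator. -/
def gammaG1 (n : ℕ) (i : Fin (n + 1)) : PresG1 n :=
  QuotientAddGroup.mk (Pi.single i (1 : ℤ))

/-- The class `τ_i ∈ G₂` of the `i`-th standard generator. -/
def tauG2 (k : ℕ) (i : Fin k) : PresG2 k :=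
  QuotientAddGroup.mk (Pi.single i (1 : ℤ))

-- auxiliary lemmas
def mkG1 (n : ℕ) : (Fin (n + 1) → ℤ) →+ PresG1 n :=
  QuotientAddGroup.mk' _

def mkG2 (k : ℕ) : (Fin k → ℤ) →+ PresG2 k :=
  QuotientAddGroup.mk' _

lemma gammaG1_eq_mk (n : ℕ) (i : Fin (n + 1)) : gammaG1 n i = mkG1 n (Pi.single i 1) := rfl

lemma tauG2_eq_mk (k : ℕ) (i : Fin k) : tauG2 k i = mkG2 k (Pi.single i 1) := rfl

lemma gamma_succ (n : ℕ) (j : Fin n) :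
    gammaG1 n j.succ = (2 : ℤ) • gammaG1 n j.castSucc := by
  have h0 : mkG1 n (2 • Pi.single (Fin.castSucc j) (1 : ℤ) - Pi.single j.succ 1) = 0 :=
    (QuotientAddGroup.eq_zero_iff _).mpr (AddSubgroup.subset_closure ⟨j, rfl⟩)
  rw [map_sub] at h0
  have h1 : (2 • Pi.single (Fin.castSucc j) (1 : ℤ) : Fin (n + 1) → ℤ) =
      (2 : ℤ) • Pi.single j.castSucc 1 := by
    ext x; simp [two_smul]
  rw [h1, map_zsmul] at h0
  rw [gammaG1_eq_mk, gammaG1_eq_mk]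
  exact (sub_eq_zero.mp h0).symm

lemma gamma_eq (n : ℕ) (i : Fin (n + 1)) :
    gammaG1 n i = ((2 : ℤ) ^ (i : ℕ)) • gammaG1 n 0 := by
  induction i using Fin.induction with
  | zero => simp
  | succ j ih =>
      rw [gamma_succ, ih, smul_smul]
      congr 1
      rw [Fin.coe_castSucc, Fin.val_succ, pow_succ]; ring

lemma tau_sum (k : ℕ) : ∑ i : Fin k, tauG2 k i = 0 := by
  simp only [tauG2_eq_mk, ← map_sum]
  apply (QuotientAddGroup.eq_zero_iff _).mpr
  exact AddSubgroup.subset_closure rfl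

lemma single_eq_smul {m : ℕ} (i : Fin m) (c : ℤ) :
    (Pi.single i c : Fin m → ℤ) = c • Pi.single i 1 := by
  ext x
  simp only [Pi.single_apply, Pi.smul_apply, smul_eq_mul]
  split <;> simp

lemma sum_single_apply_smul {m : ℕ} {A : Type*} [AddCommGroup A] (i0 : Fin m) (c : ℤ)
    (g : Fin m → A) :
    ∑ i, (Pi.single i0 c : Fin m → ℤ) i • g i = c • g i0 := by
  simp [Pi.single_apply, ite_smul]

lemma mkG1_surjective (n : ℕ) : Function.Surjective (mkG1 n) :=
  QuotientAddGroup.mk'_surjective _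

lemma mkG2_surjective (k : ℕ) : Function.Surjective (mkG2 k) :=
  QuotientAddGroup.mk'_surjective _

lemma mk_eq_sum_gamma (n : ℕ) (v : Fin (n + 1) → ℤ) :
    mkG1 n v = ∑ i, v i • gammaG1 n i := by
  conv_lhs => rw [← Finset.univ_sum_single v]
  rw [map_sum]
  refine Finset.sum_congr rfl fun i _ => ?_
  rw [gammaG1_eq_mk, ← map_zsmul, single_eq_smul]

lemma mk_eq_sum_tau (k : ℕ) (w : Fin k → ℤ) :
    mkG2 k w = ∑ i, w i • tauG2 k i := by
  conv_lhs => rw [← Finset.univ_sum_single w]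
  rw [map_sum]
  refine Finset.sum_congr rfl fun i _ => ?_
  rw [tauG2_eq_mk, ← map_zsmul, single_eq_smul]

/-- Let `d ≥ 2`, let `G₁ = ⟨γ_0,…,γ_n ∣ 2γ_0 = γ_1, …, 2γ_{n−1} = γ_n⟩` and
`G₂ = ⟨τ_1,…,τ_k ∣ τ_1 + ⋯ + τ_k = 0⟩`, and let `0 ≤ n_1 < ⋯ < n_k ≤ n`. Then the
quotient of `G₁ ⊕ G₂` by the subgroup generated by the elements `(γ_{n_i}, −τ_i)` has
torsion subgroup isomorphic to `ℤ/(2^{n_1} + ⋯ + 2^{n_k})ℤ`. -/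
theorem torsion_of_glued_presentation (d : ℕ) (hd : 2 ≤ d) (n k : ℕ)
    (nn : Fin (k + 1) → ℕ) (hmono : StrictMono nn) (hle : nn (Fin.last k) ≤ n) :
    Nonempty
      ((AddCommGroup.torsion
        ((PresG1 n × PresG2 (k + 1)) ⧸
          AddSubgroup.closure
            {x : PresG1 n × PresG2 (k + 1) | ∃ i : Fin (k + 1), x =
                (gammaG1 n (⟨nn i, Nat.lt_succ_of_le
                    (le_trans (hmono.monotone (Fin.le_last i)) hle)⟩ : Fin (n + 1)),
                 -tauG2 (k + 1) i)})) ≃+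
        ZMod (∑ i, 2 ^ (nn i))) := by
  classical
  set N : ℕ := ∑ i, 2 ^ (nn i) with hNdef
  have hN : 0 < N := Finset.sum_pos (fun i _ => pow_pos (by norm_num) _) ⟨0, Finset.mem_univ 0⟩
  haveI : NeZero N := ⟨hN.ne'⟩
  have hlt : ∀ i : Fin (k + 1), nn i < n + 1 := fun i =>
    Nat.lt_succ_of_le (le_trans (hmono.monotone (Fin.le_last i)) hle)
  set H : AddSubgroup (PresG1 n × PresG2 (k + 1)) := AddSubgroup.closure
    {x : PresG1 n × PresG2 (k + 1) | ∃ i : Fin (k + 1), x =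
        (gammaG1 n (⟨nn i, Nat.lt_succ_of_le
            (le_trans (hmono.monotone (Fin.le_last i)) hle)⟩ : Fin (n + 1)),
         -tauG2 (k + 1) i)} with hHdef
  set Q := (PresG1 n × PresG2 (k + 1)) ⧸ H with hQdef
  let ι : (PresG1 n × PresG2 (k + 1)) →+ Q := QuotientAddGroup.mk' H
  let x0 : Q := ι (gammaG1 n 0, 0)
  have hrel : ∀ i : Fin (k + 1),
      ι (gammaG1 n ⟨nn i, hlt i⟩, -tauG2 (k + 1) i) = 0 := by
    intro i
    refine (QuotientAddGroup.eq_zero_iff _).mpr ?_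
    exact AddSubgroup.subset_closure ⟨i, rfl⟩
  have hx : ∀ i : Fin (n + 1), ι (gammaG1 n i, 0) = ((2 : ℤ) ^ (i : ℕ)) • x0 := by
    intro i
    rw [gamma_eq n i]
    have h : (((2 : ℤ) ^ (i : ℕ)) • gammaG1 n 0, (0 : PresG2 (k + 1))) =
        ((2 : ℤ) ^ (i : ℕ)) • ((gammaG1 n 0, 0) : PresG1 n × PresG2 (k + 1)) := by
      rw [Prod.smul_mk, smul_zero]
    rw [h, map_zsmul]
  have htau : ∀ i : Fin (k + 1), ι (0, tauG2 (k + 1) i) = ((2 : ℤ) ^ (nn i)) • x0 := by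
    intro i
    have h2 : ((gammaG1 n ⟨nn i, hlt i⟩, -tauG2 (k + 1) i) : PresG1 n × PresG2 (k + 1)) =
        ((gammaG1 n ⟨nn i, hlt i⟩, 0) : PresG1 n × PresG2 (k + 1)) - (0, tauG2 (k + 1) i) := by
      rw [Prod.mk_sub_mk, sub_zero, zero_sub]
    have h3 := hrel i
    rw [h2, map_sub, sub_eq_zero] at h3
    rw [← h3, hx]
  have hNx0 : (N : ℤ) • x0 = 0 := by
    have hcast : ((N : ℤ)) = ∑ i : Fin (k + 1), (2 : ℤ) ^ (nn i) := by
      rw [hNdef]; push_cast; rfl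
    rw [hcast]
    have hs : ((∑ i : Fin (k + 1), (2 : ℤ) ^ (nn i)) • x0) =
        ∑ i : Fin (k + 1), ((2 : ℤ) ^ (nn i)) • x0 := by
      rw [← zmultiplesHom_apply, map_sum]
      simp [zmultiplesHom_apply]
    rw [hs]
    simp only [← htau]
    rw [← map_sum]
    have hsum : (∑ i : Fin (k + 1), (((0 : PresG1 n), tauG2 (k + 1) i) :
        PresG1 n × PresG2 (k + 1))) = ((0 : PresG1 n), ∑ i, tauG2 (k + 1) i) := by
      rw [Prod.ext_iff]
      constructor
      · simp [Prod.fst_sum]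
      · simp [Prod.snd_sum]
    rw [hsum, tau_sum]
    exact map_zero ι
  -- homomorphisms to ZMod N
  let f1 : (Fin (n + 1) → ℤ) →+ ZMod N :=
    AddMonoidHom.mk' (fun v => ∑ i, v i • ((2 : ZMod N) ^ (i : ℕ)))
      (by intro a b; simp [add_smul, Finset.sum_add_distrib])
  let f2 : (Fin (k + 1) → ℤ) →+ ZMod N :=
    AddMonoidHom.mk' (fun w => ∑ i, w i • ((2 : ZMod N) ^ (nn i)))
      (by intro a b; simp [add_smul, Finset.sum_add_distrib])
  have hf1 : ∀ (i0 : Fin (n + 1)) (c : ℤ), f1 (Pi.single i0 c) = c • (2 : ZMod N) ^ (i0 : ℕ) := by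
    intro i0 c
    exact sum_single_apply_smul i0 c _
  have hf2 : ∀ (i0 : Fin (k + 1)) (c : ℤ), f2 (Pi.single i0 c) = c • (2 : ZMod N) ^ (nn i0) := by
    intro i0 c
    exact sum_single_apply_smul i0 c _
  have hker1 : AddSubgroup.closure
      {v | ∃ j : Fin n, v = 2 • Pi.single (Fin.castSucc j) (1 : ℤ) - Pi.single j.succ 1} ≤
      f1.ker := by
    rw [AddSubgroup.closure_le]
    rintro v ⟨j, rfl⟩
    have : (2 • Pi.single (Fin.castSucc j) (1 : ℤ) - Pi.single j.succ 1 : Fin (n + 1) → ℤ) =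
        Pi.single (Fin.castSucc j) (2 : ℤ) - Pi.single j.succ 1 := by
      rw [single_eq_smul (Fin.castSucc j) 2]
      norm_num
    rw [SetLike.mem_coe, AddMonoidHom.mem_ker, this, map_sub, hf1, hf1]
    rw [Fin.coe_castSucc, Fin.val_succ, pow_succ]
    simp only [zsmul_eq_mul, one_zsmul]
    push_cast
    ring
  have hker2 : AddSubgroup.closure {∑ i : Fin (k + 1), Pi.single i (1 : ℤ)} ≤ f2.ker := by
    rw [AddSubgroup.closure_le]
    rintro v hv
    rw [Set.mem_singleton_iff] at hv
    subst hv
    rw [SetLike.mem_coe, AddMonoidHom.mem_ker, map_sum]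
    have : ∀ i : Fin (k + 1), f2 (Pi.single i (1 : ℤ)) = ((2 ^ (nn i) : ℕ) : ZMod N) := by
      intro i; rw [hf2, zsmul_eq_mul]; push_cast; ring
    rw [Finset.sum_congr rfl fun i _ => this i, ← Nat.cast_sum, ← hNdef, ZMod.natCast_self]
  let φ1 : PresG1 n →+ ZMod N := QuotientAddGroup.lift _ f1 hker1
  let φ2 : PresG2 (k + 1) →+ ZMod N := QuotientAddGroup.lift _ f2 hker2
  have hφ1 : ∀ v, φ1 (mkG1 n v) = f1 v := fun v => rfl
  have hφ2 : ∀ w, φ2 (mkG2 (k + 1) w) = f2 w := fun w => rfl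
  let φ0 : (PresG1 n × PresG2 (k + 1)) →+ ZMod N := φ1.coprod φ2
  have hkerφ : H ≤ φ0.ker := by
    rw [hHdef, AddSubgroup.closure_le]
    rintro x ⟨i, rfl⟩
    rw [SetLike.mem_coe, AddMonoidHom.mem_ker]
    have e1 : φ0 ((gammaG1 n ⟨nn i, hlt i⟩, -tauG2 (k + 1) i) : PresG1 n × PresG2 (k + 1)) =
        φ1 (gammaG1 n ⟨nn i, hlt i⟩) + φ2 (-tauG2 (k + 1) i) := rfl
    rw [e1, map_neg, gammaG1_eq_mk, tauG2_eq_mk, hφ1, hφ2, hf1, hf2]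
    simp only [zsmul_eq_mul]
    push_cast
    ring
  let φ : Q →+ ZMod N := QuotientAddGroup.lift H φ0 hkerφ
  have hφmk : ∀ x : PresG1 n × PresG2 (k + 1), φ (ι x) = φ0 x := fun x => rfl
  let ψ : ZMod N →+ Q := ZMod.lift N ⟨zmultiplesHom Q x0, by simpa using hNx0⟩
  have hψ : ∀ c : ℤ, ψ ((c : ℤ) : ZMod N) = c • x0 := by
    intro c
    simp [ψ, ZMod.lift_coe]
  have hφx0 : φ x0 = 1 := by
    have e1 : φ x0 = φ1 (gammaG1 n 0) + φ2 0 := rfl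
    rw [e1, map_zero, add_zero, gammaG1_eq_mk, hφ1, hf1]
    simp
  have hri : ∀ z : ZMod N, φ (ψ z) = z := by
    intro z
    obtain ⟨c, rfl⟩ := ZMod.intCast_surjective z
    rw [hψ, map_zsmul, hφx0]
    simp
  have hli : ∀ q : Q, ψ (φ q) = q := by
    intro q
    obtain ⟨x, rfl⟩ := QuotientAddGroup.mk'_surjective H q
    obtain ⟨a, b⟩ := x
    obtain ⟨v, rfl⟩ := mkG1_surjective n a
    obtain ⟨w, rfl⟩ := mkG2_surjective (k + 1) b
    have hval : φ (ι (mkG1 n v, mkG2 (k + 1) w)) =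
        (((∑ i, v i * 2 ^ (i : ℕ) + ∑ j, w j * 2 ^ (nn j)) : ℤ) : ZMod N) := by
      rw [hφmk]
      have e1 : φ0 ((mkG1 n v, mkG2 (k + 1) w) : PresG1 n × PresG2 (k + 1)) = f1 v + f2 w := rfl
      rw [e1]
      show (∑ i, v i • ((2 : ZMod N) ^ (i : ℕ))) + (∑ i, w i • ((2 : ZMod N) ^ (nn i))) = _
      push_cast
      simp [zsmul_eq_mul]
    show ψ (φ (ι (mkG1 n v, mkG2 (k + 1) w))) = ι (mkG1 n v, mkG2 (k + 1) w)
    rw [hval, hψ]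
    have hprod : ((mkG1 n v, mkG2 (k + 1) w) : PresG1 n × PresG2 (k + 1)) =
        (∑ i, v i • ((gammaG1 n i, 0) : PresG1 n × PresG2 (k + 1))) +
        (∑ j, w j • (((0 : PresG1 n), tauG2 (k + 1) j) : PresG1 n × PresG2 (k + 1))) := by
      rw [Prod.ext_iff]
      constructor
      · simp [Prod.fst_sum, mk_eq_sum_gamma]
      · simp [Prod.snd_sum, mk_eq_sum_tau]
    rw [hprod, map_add, map_sum, map_sum]
    simp only [map_zsmul, hx, htau, smul_smul]
    rw [← Finset.sum_smul, ← Finset.sum_smul, ← add_smul]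
  let e : Q ≃+ ZMod N := AddEquiv.mk' ⟨φ, ψ, hli, hri⟩ (map_add φ)
  haveI : Finite Q := Finite.of_equiv _ e.symm.toEquiv
  have htor : AddCommGroup.torsion Q = ⊤ := by
    rw [AddSubgroup.eq_top_iff']
    intro x
    exact isOfFinAddOrder_of_finite x
  rw [htor]
  exact ⟨AddSubgroup.topEquiv.trans e⟩
end
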